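/- arXiv:2604.18697 — 2 statements merged into one kernel-verified Lean document; each statement's English description precedes it below -/
import Mathlib

section
/- For any real ε > 0 and p₀ ∈ (0,1], the inequality (e^ε - 1)/(e^ε + 1) < e^ε/(e^ε - 1 + 1/p₀) holds if and only if p₀ > (e^ε - 1)/(3e^ε - 1). -/
theorem dpd_not_bound_de_iff (ε p₀ : ℝ) (hε : 0 < ε) (hp0 : 0 < p₀) (hp1 : p₀ ≤ 1) :
    (Real.exp ε - 1) / (Real.exp ε + 1) < Real.exp ε / (Real.exp ε - 1 + 1 / p₀) ↔
      (Real.exp ε - 1) / (3 * Real.exp ε - 1) < p₀ := by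
  have hE : 1 < Real.exp ε := by nlinarith [Real.add_one_le_exp ε]
  set E := Real.exp ε with hEdef
  have h1 : (0:ℝ) < E + 1 := by linarith
  have h2 : (0:ℝ) < E - 1 + 1 / p₀ := by have := one_div_pos.mpr hp0; linarith
  have h3 : (0:ℝ) < 3 * E - 1 := by linarith
  rw [div_lt_div_iff₀ h1 h2, div_lt_iff₀ h3]
  constructor <;> intro h <;> nlinarith [mul_pos hp0 h3, mul_pos hp0 hp0,
    mul_pos hp0 (sub_pos.mpr hE), one_div_pos.mpr hp0, mul_one_div_cancel (ne_of_gt hp0)]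
end

section
/- Let P_v and P'_v be positive functions on sequences (pre- and post-defense verbatim generation probabilities), let d be a nonnegative symmetric distance with d(z,z) = 0, c > 0, and N(z) = {z' : d(z,z') ≤ c} a finite nonempty neighborhood. Assume |log P_v(x) - log P_v(y)| ≤ L₀ d(x,y) and |log P'_v(x) - log P'_v(y)| ≤ L₀' d(x,y) for all x, y ∈ N(z). If P'_v(z) = P_v(z) · 2^{-Δ} with Δ > (L₀ + L₀') c / ln 2, then the average of P'_v over N(z) is strictly less than the average of P_v over N(z). -/
theorem neighborhood_ratio_suppression {α : Type*} [DecidableEq α]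
    (P P' : α → ℝ) (d : α → α → ℝ)
    (hd0 : ∀ x y, 0 ≤ d x y) (hdsymm : ∀ x y, d x y = d y x)
    (z : α) (hdz : d z z = 0) (c : ℝ) (hc : 0 < c)
    (N : Finset α) (hNmem : ∀ x, x ∈ N ↔ d z x ≤ c)
    (hPpos : ∀ x ∈ N, 0 < P x) (hP'pos : ∀ x ∈ N, 0 < P' x)
    (L₀ L₀' : ℝ) (hL0 : 0 ≤ L₀) (hL0' : 0 ≤ L₀')
    (hLip : ∀ x ∈ N, ∀ y ∈ N, |Real.log (P x) - Real.log (P y)| ≤ L₀ * d x y)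
    (hLip' : ∀ x ∈ N, ∀ y ∈ N, |Real.log (P' x) - Real.log (P' y)| ≤ L₀' * d x y)
    (Δ : ℝ) (hΔ : (L₀ + L₀') * c / Real.log 2 < Δ)
    (hdef : P' z = P z * (2 : ℝ) ^ (-Δ)) :
    (∑ x ∈ N, P' x) / N.card < (∑ x ∈ N, P x) / N.card := by
  have hzN : z ∈ N := (hNmem z).mpr (by rw [hdz]; exact hc.le)
  have hlog2 : (0:ℝ) < Real.log 2 := Real.log_pos one_lt_two
  have hΔ' : (L₀ + L₀') * c < Δ * Real.log 2 := by
    rw [div_lt_iff₀ hlog2] at hΔ; linarith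
  have key : ∀ x ∈ N, P' x < P x := by
    intro x hx
    have hdx : d x z ≤ c := by rw [hdsymm]; exact (hNmem x).mp hx
    have h1 := abs_le.mp (hLip' x hx z hzN)
    have h2 := abs_le.mp (hLip x hx z hzN)
    have hP'z : Real.log (P' z) = Real.log (P z) - Δ * Real.log 2 := by
      rw [hdef, Real.log_mul (hPpos z hzN).ne' (by positivity),
        Real.log_rpow two_pos]
      ring
    have hmul : L₀' * d x z ≤ L₀' * c := mul_le_mul_of_nonneg_left hdx hL0'
    have hmul2 : L₀ * d x z ≤ L₀ * c := mul_le_mul_of_nonneg_left hdx hL0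
    have hlt : Real.log (P' x) < Real.log (P x) := by
      have e1 := h1.2
      have e2 := h2.1
      rw [hP'z] at e1
      linarith
    exact (Real.log_lt_log_iff (hP'pos x hx) (hPpos x hx)).mp hlt
  have hne : N.Nonempty := ⟨z, hzN⟩
  have hsum : (∑ x ∈ N, P' x) < ∑ x ∈ N, P x :=
    Finset.sum_lt_sum_of_nonempty hne key
  have hcard : (0:ℝ) < N.card := by exact_mod_cast Finset.card_pos.mpr hne
  gcongr
end
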